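/- P-almost surely, for every k ∈ ℕ: ⟨∇f(x^k) − ∇f(x̂^k), x̄^{k+1} − x^k⟩_V ≤ τ L_res^V √p_max · Σ_{i=1}^m p_i ‖x̄^{k+1}_i − x^k_i‖² + α_k − E[α_{k+1} | i_0, …, i_{k−1}]. -/

import Mathlib

open MeasureTheory ProbabilityTheory Filter Topology Set
open scoped BigOperators RealInnerProductSpace ENNReal

noncomputable section

set_option synthInstance.maxHeartbeats 400000
set_option maxHeartbeats 1000000

variable {m : ℕ} {H : Fin m → Type*}
  [∀ i, NormedAddCommGroup (H i)] [∀ i, InnerProductSpace ℝ (H i)]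

/-- The Hilbert direct sum `H = H₁ ⊕ ⋯ ⊕ H_m` is complete when each factor is. -/
instance [∀ i, CompleteSpace (H i)] : CompleteSpace (PiLp 2 H) :=
  inferInstance

/-- Weighted squared norm `∑ i, w i * ‖u i‖²` on the direct sum. -/
def wnormSq (w : Fin m → ℝ) (u : PiLp 2 H) : ℝ := ∑ i, w i * ‖u i‖ ^ 2

/-- Weighted inner product `∑ i, w i * ⟪u i, v i⟫` on the direct sum. -/
def winner (w : Fin m → ℝ) (u v : PiLp 2 H) : ℝ := ∑ i, w i * ⟪u i, v i⟫

/-- `upd x i u` replaces the `i`-th coordinate of `x` by `u`. -/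
def upd (x : PiLp 2 H) (i : Fin m) (u : H i) : PiLp 2 H := WithLp.toLp 2 (Function.update x i u)

/-- `IsProx c gi v pt` asserts that `pt` is the unique minimizer of
`u ↦ gi u + (1/(2c))‖u − v‖²`, i.e. `pt = prox_{c·gi}(v)`. -/
def IsProx {E : Type*} [NormedAddCommGroup E] (c : ℝ) (gi : E → ℝ) (v pt : E) : Prop :=
  (∀ u : E, gi pt + 1 / (2 * c) * ‖pt - v‖ ^ 2 ≤ gi u + 1 / (2 * c) * ‖u - v‖ ^ 2) ∧
  (∀ u : E, gi u + 1 / (2 * c) * ‖u - v‖ ^ 2 ≤ gi pt + 1 / (2 * c) * ‖pt - v‖ ^ 2 → u = pt)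

/-- The objective `F = f + g`, where `g x = ∑ i, g i (x i)`. -/
def Fobj (f : PiLp 2 H → ℝ) (g : ∀ i, H i → ℝ) (z : PiLp 2 H) : ℝ := f z + ∑ i, g i (z i)

/-- Delayed iterate `x̂^k`, coordinate `j` reads `x^{k - d^k_j}` (deterministic trajectory,
indices in `ℤ`, with `x^n = x^0` for `n ≤ 0`). -/
def xhatD (x : ℤ → PiLp 2 H) (d : ℕ → Fin m → ℕ) (k : ℕ) : PiLp 2 H :=
  WithLp.toLp 2 fun j => x ((k : ℤ) - d k j) j

/-- Delayed iterate `x̂^k` (random trajectory). -/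
def xhatP {Ω : Type*} (x : ℤ → Ω → PiLp 2 H) (d : ℕ → Fin m → ℕ) (k : ℕ) (ω : Ω) :
    PiLp 2 H :=
  WithLp.toLp 2 fun j => x ((k : ℤ) - d k j) ω j

/-- `alphaT c τ x k = c * ∑_{h=k-τ}^{k-1} (h-(k-τ)+1) ‖x^{h+1} - x^h‖²`. -/
def alphaT (c : ℝ) (τ : ℕ) (x : ℤ → PiLp 2 H) (k : ℕ) : ℝ :=
  c * ∑ j ∈ Finset.range τ,
    ((j : ℝ) + 1) * ‖x ((k : ℤ) - τ + j + 1) - x ((k : ℤ) - τ + j)‖ ^ 2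

/-- `alphaV p c τ x k ω = c * ∑_{h=k-τ}^{k-1} (h-(k-τ)+1) ‖x^{h+1} - x^h‖²_V`. -/
def alphaV {Ω : Type*} (p : Fin m → ℝ) (c : ℝ) (τ : ℕ) (x : ℤ → Ω → PiLp 2 H)
    (k : ℕ) (ω : Ω) : ℝ :=
  c * ∑ j ∈ Finset.range τ,
    ((j : ℝ) + 1) * wnormSq p (x ((k : ℤ) - τ + j + 1) ω - x ((k : ℤ) - τ + j) ω)

/-- The constant `L_res^V/(2√p_max)` appearing in `α_k`, where `L_res^V = L_res √(p_max/p_min)`. -/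
def alphaConst (Lres pmax pmin : ℝ) : ℝ :=
  Lres * Real.sqrt (pmax / pmin) / (2 * Real.sqrt pmax)

/-- The σ-algebra generated by `i_0, …, i_{k-1}`. -/
def pastFiltration {Ω : Type*} [MeasurableSpace Ω] (idx : ℕ → Ω → Fin m) (k : ℕ) :
    MeasurableSpace Ω :=
  ⨆ j ∈ Finset.range k, MeasurableSpace.comap (idx j) ⊤

/-- The random index set `J(k) = {h ∈ {k-τ,…,k-1} : d^k_{i_h} ≥ k-h}`. -/
def Jset {Ω : Type*} (idx : ℕ → Ω → Fin m) (d : ℕ → Fin m → ℕ) (τ k : ℕ) (ω : Ω) :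
    Finset ℕ :=
  (Finset.Ico (k - τ) k).filter fun h => k - h ≤ d k (idx h ω)


/-!
Cauchy–Schwarz in the weighted norm bounds the left side by `√p_max ‖∇f(x^k) - ∇f(x̂^k)‖`
times `‖x̄^{k+1} - x^k‖_V`. Moving from `x̂^k` to `x^k` one coordinate at a time, the gradient
changes by at most `L_res` times the total coordinate movement over the last `τ` steps; every step
of the algorithm moves a single coordinate, so step `h` contributes at most
`‖x^{h+1} - x^h‖_V / √p_min`. Young's inequality then splits each of the `τ` products into a
multiple of `‖x^{h+1} - x^h‖²_V` and one of `‖x̄^{k+1} - x^k‖²_V`.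

The first multiple is the constant `c` of `α`, and `α_k` minus `c` times the sum of these squared
increments is exactly `α_{k+1}` without its newest term `τ c p_{i_k} ‖x̄^{k+1}_{i_k} - x^k_{i_k}‖²`. Since the prox point is
unique, `x^k` and `x̄^{k+1}` are functions of `i_0, …, i_{k-1}`, while `i_k` is independent of
them; so the conditional expectation of the newest term is `τ c ∑ p_i² ‖x̄^{k+1}_i - x^k_i‖²`,
at most `τ c p_max ‖x̄^{k+1} - x^k‖²_V`.
-/

set_option linter.unusedSectionVars false

open Finset

section WeightedNorm

variable {p : Fin m → ℝ}

lemma wnormSq_nonneg (hp : ∀ i, 0 ≤ p i) (u : PiLp 2 H) : 0 ≤ wnormSq p u :=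
  sum_nonneg fun i _ => mul_nonneg (hp i) (sq_nonneg _)

lemma wnormSq_upd_sub (z : PiLp 2 H) (i : Fin m) (u : H i) :
    wnormSq p (upd z i u - z) = p i * ‖u - z i‖ ^ 2 := by
  rw [wnormSq, sum_eq_single i (fun j _ hj => by simp [upd, Function.update_of_ne hj])
    (by simp)]
  simp [upd]

lemma winner_le_sqrt_mul_sqrt (hp : ∀ i, 0 ≤ p i) (a b : PiLp 2 H) :
    winner p a b ≤ √(wnormSq p a) * √(wnormSq p b) := by
  have hsq : ∀ u : PiLp 2 H, ∑ i, (√(p i) * ‖u i‖) ^ 2 = wnormSq p u := fun u =>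
    sum_congr rfl fun i _ => by rw [mul_pow, Real.sq_sqrt (hp i)]
  calc winner p a b ≤ ∑ i, (√(p i) * ‖a i‖) * (√(p i) * ‖b i‖) := by
        refine sum_le_sum fun i _ => ?_
        rw [mul_mul_mul_comm, Real.mul_self_sqrt (hp i)]
        exact mul_le_mul_of_nonneg_left (real_inner_le_norm _ _) (hp i)
    _ ≤ √(wnormSq p a) * √(wnormSq p b) := by
        rw [← hsq a, ← hsq b]
        exact Real.sum_mul_le_sqrt_mul_sqrt _ _ _

lemma wnormSq_le_mul_norm_sq {pmax : ℝ} (hpmax : ∀ i, p i ≤ pmax) (a : PiLp 2 H) :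
    wnormSq p a ≤ pmax * ‖a‖ ^ 2 := by
  rw [PiLp.norm_sq_eq_of_L2, mul_sum]
  exact sum_le_sum fun i _ => mul_le_mul_of_nonneg_right (hpmax i) (sq_nonneg _)

lemma sqrt_mul_sum_norm_le_sqrt_wnormSq {pmin : ℝ} (hpmin_nonneg : 0 ≤ pmin)
    (hpmin : ∀ i, pmin ≤ p i) {v : PiLp 2 H} (hv : {j | v j ≠ 0}.Subsingleton) :
    √pmin * ∑ j, ‖v j‖ ≤ √(wnormSq p v) := by
  rcases hv.eq_empty_or_singleton with hempty | ⟨i, hi⟩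
  · have hzero : ∀ j, v j = 0 := fun j => by simpa using Set.ext_iff.1 hempty j
    simp [hzero]
  · have hzero : ∀ j ≠ i, v j = 0 := fun j hj => by simpa [hj] using Set.ext_iff.1 hi j
    have hp : ∀ j, 0 ≤ p j := fun j => hpmin_nonneg.trans (hpmin j)
    rw [sum_eq_single i (fun j _ hj => by rw [hzero j hj, norm_zero]) (by simp),
      ← Real.sqrt_sq (norm_nonneg (v i)), ← Real.sqrt_mul hpmin_nonneg]
    gcongr
    calc pmin * ‖v i‖ ^ 2 ≤ p i * ‖v i‖ ^ 2 := by gcongr; exact hpmin i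
      _ ≤ wnormSq p v := single_le_sum (f := fun j => p j * ‖v j‖ ^ 2)
          (fun j _ => mul_nonneg (hp j) (sq_nonneg _)) (mem_univ i)

end WeightedNorm

lemma norm_sub_le_mul_sum_norm_sub {E : Type*} [SeminormedAddCommGroup E]
    {F : PiLp 2 H → E} {K : ℝ}
    (hF : ∀ (z : PiLp 2 H) (i : Fin m) (u u' : H i), ‖F (upd z i u) - F (upd z i u')‖ ≤ K * ‖u - u'‖)
    (w z : PiLp 2 H) :
    ‖F w - F z‖ ≤ K * ∑ j, ‖w j - z j‖ := by
  classical
  let mix (s : Finset (Fin m)) : PiLp 2 H := WithLp.toLp 2 fun j => if j ∈ s then w j else z j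
  suffices h : ∀ s, ‖F (mix s) - F z‖ ≤ K * ∑ j ∈ s, ‖w j - z j‖ by
    simpa [mix] using h univ
  intro s
  induction s using Finset.induction_on with
  | empty => simp [mix]
  | insert i s hi ih =>
    have hin : mix (insert i s) = upd (mix s) i (w i) := by
      ext j
      by_cases hj : j = i
      · subst hj; simp [mix, upd]
      · simp [mix, upd, hj]
    have hout : mix s = upd (mix s) i (z i) := by
      ext j
      by_cases hj : j = i
      · subst hj; simp [mix, upd, hi]
      · simp [upd, Function.update_of_ne hj]
    calc ‖F (mix (insert i s)) - F z‖
        ≤ ‖F (mix (insert i s)) - F (mix s)‖ + ‖F (mix s) - F z‖ :=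
          norm_sub_le_norm_sub_add_norm_sub _ _ _
      _ ≤ K * ‖w i - z i‖ + K * ∑ j ∈ s, ‖w j - z j‖ := by
          have hstep := hF (mix s) i (w i) (z i)
          rw [← hin, ← hout] at hstep
          gcongr
      _ = K * ∑ j ∈ insert i s, ‖w j - z j‖ := by rw [sum_insert hi]; ring

lemma sum_norm_sub_xhatD_le (y : ℤ → PiLp 2 H) (d : ℕ → Fin m → ℕ) {τ k : ℕ}
    (hd : ∀ j, d k j ≤ τ) :
    ∑ j, ‖y k j - xhatD y d k j‖ ≤
      ∑ t ∈ range τ, ∑ j, ‖y (k - τ + t + 1) j - y (k - τ + t) j‖ := by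
  rw [sum_comm]
  refine sum_le_sum fun j _ => ?_
  let yj : ℕ → H j := fun t => y (k - τ + t) j
  have hτ : yj τ = y k j := by simp [yj]
  have hdelay : yj (τ - d k j) = xhatD y d k j := by
    simp [yj, xhatD, Nat.cast_sub (hd j)]
  have hstep : ∀ t : ℕ, dist (yj t) (yj (t + 1)) = ‖y (k - τ + t + 1) j - y (k - τ + t) j‖ :=
    fun t => by simp [yj, dist_eq_norm', add_assoc]
  calc ‖y k j - xhatD y d k j‖ = dist (yj (τ - d k j)) (yj τ) := by
        rw [hτ, hdelay, dist_eq_norm']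
    _ ≤ ∑ t ∈ Ico (τ - d k j) τ, dist (yj t) (yj (t + 1)) := dist_le_Ico_sum_dist _ (by omega)
    _ ≤ ∑ t ∈ range τ, dist (yj t) (yj (t + 1)) :=
        sum_le_sum_of_subset_of_nonneg (fun t ht => mem_range.2 (mem_Ico.1 ht).2)
          fun t _ _ => dist_nonneg
    _ = _ := sum_congr rfl fun t _ => hstep t

lemma alphaConst_nonneg {Lres : ℝ} (hLres : 0 ≤ Lres) (pmax pmin : ℝ) :
    0 ≤ alphaConst Lres pmax pmin := by
  unfold alphaConst; positivity

lemma alphaConst_mul {Lres pmax : ℝ} (hpmax : 0 < pmax) (pmin : ℝ) :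
    alphaConst Lres pmax pmin * pmax = Lres * √(pmax / pmin) * √pmax / 2 := by
  have hsqrt : √pmax ≠ 0 := (Real.sqrt_pos.2 hpmax).ne'
  unfold alphaConst
  field_simp
  rw [Real.sq_sqrt hpmax.le]
  ring

lemma mul_mul_le_young {L s : ℝ} (hL : 0 ≤ L) (hs : 0 < s) (a b : ℝ) :
    L * a * b ≤ L / (2 * s) * a ^ 2 + L * s / 2 * b ^ 2 := by
  have h := mul_le_mul_of_nonneg_left (two_mul_le_add_sq a (s * b))
    (div_nonneg hL (mul_pos two_pos hs).le)
  have hs0 : s ≠ 0 := hs.ne'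
  field_simp at h ⊢
  nlinarith [h]

lemma sqrt_wnormSq_grad_sub_delayed_grad_le {p : Fin m → ℝ} {pmin pmax Lres : ℝ}
    {f' : PiLp 2 H → PiLp 2 H} {y : ℤ → PiLp 2 H} {d : ℕ → Fin m → ℕ} {τ k : ℕ}
    (hpmin_pos : 0 < pmin) (hpmin : ∀ i, pmin ≤ p i) (hpmax : ∀ i, p i ≤ pmax)
    (hLres : 0 ≤ Lres)
    (hf' : ∀ (z : PiLp 2 H) (i : Fin m) (u u' : H i),
      ‖f' (upd z i u) - f' (upd z i u')‖ ≤ Lres * ‖u - u'‖)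
    (hy : ∀ n : ℤ, {j | y (n + 1) j ≠ y n j}.Subsingleton) (hd : ∀ j, d k j ≤ τ) :
    √(wnormSq p (f' (y k) - f' (xhatD y d k))) ≤
      Lres * √(pmax / pmin) *
        ∑ t ∈ range τ, √(wnormSq p (y (k - τ + t + 1) - y (k - τ + t))) := by
  set W : ℕ → ℝ := fun t => wnormSq p (y (k - τ + t + 1) - y (k - τ + t))
  have hpmin_sqrt : 0 < √pmin := Real.sqrt_pos.2 hpmin_pos
  have hstep : ∀ t : ℕ, ∑ j, ‖y (k - τ + t + 1) j - y (k - τ + t) j‖ ≤ √(W t) / √pmin := by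
    intro t
    rw [le_div_iff₀' hpmin_sqrt]
    have h := sqrt_mul_sum_norm_le_sqrt_wnormSq (v := y (k - τ + t + 1) - y (k - τ + t))
      hpmin_pos.le hpmin (by simpa only [PiLp.sub_apply, ne_eq, sub_eq_zero] using hy (k - τ + t))
    simpa only [PiLp.sub_apply] using h
  calc √(wnormSq p (f' (y k) - f' (xhatD y d k)))
      ≤ √pmax * ‖f' (y k) - f' (xhatD y d k)‖ := by
        rw [← Real.sqrt_sq (norm_nonneg (f' (y k) - _)), ← Real.sqrt_mul' _ (sq_nonneg _)]
        exact Real.sqrt_le_sqrt (wnormSq_le_mul_norm_sq hpmax _)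
    _ ≤ √pmax * (Lres * ∑ j, ‖y k j - xhatD y d k j‖) := by
        gcongr
        exact norm_sub_le_mul_sum_norm_sub hf' _ _
    _ ≤ √pmax * (Lres * ∑ t ∈ range τ, √(W t) / √pmin) := by
        gcongr
        exact (sum_norm_sub_xhatD_le y d hd).trans (sum_le_sum fun t _ => hstep t)
    _ = Lres * √(pmax / pmin) * ∑ t ∈ range τ, √(W t) := by
        rw [← sum_div, Real.sqrt_div' _ hpmin_pos.le]
        ring

theorem winner_grad_sub_delayed_grad_le {p : Fin m → ℝ} {pmin pmax Lres : ℝ}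
    {f' : PiLp 2 H → PiLp 2 H} {y : ℤ → PiLp 2 H} {d : ℕ → Fin m → ℕ} {τ k : ℕ}
    (hpmin_pos : 0 < pmin) (hpmin : ∀ i, pmin ≤ p i) (hpmax : ∀ i, p i ≤ pmax)
    (hpmin_le_pmax : pmin ≤ pmax) (hLres : 0 ≤ Lres)
    (hf' : ∀ (z : PiLp 2 H) (i : Fin m) (u u' : H i),
      ‖f' (upd z i u) - f' (upd z i u')‖ ≤ Lres * ‖u - u'‖)
    (hy : ∀ n : ℤ, {j | y (n + 1) j ≠ y n j}.Subsingleton) (hd : ∀ j, d k j ≤ τ)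
    (z : PiLp 2 H) :
    winner p (f' (y k) - f' (xhatD y d k)) (z - y k) ≤
      τ * (Lres * √(pmax / pmin)) * √pmax / 2 * wnormSq p (z - y k) +
        alphaConst Lres pmax pmin *
          ∑ t ∈ range τ, wnormSq p (y (k - τ + t + 1) - y (k - τ + t)) := by
  set W : ℕ → ℝ := fun t => wnormSq p (y (k - τ + t + 1) - y (k - τ + t))
  set S := wnormSq p (z - y k)
  set LV := Lres * √(pmax / pmin)
  have hp : ∀ i, 0 ≤ p i := fun i => hpmin_pos.le.trans (hpmin i)
  have hpmax_pos : 0 < √pmax := Real.sqrt_pos.2 (hpmin_pos.trans_le hpmin_le_pmax)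
  have hLV : 0 ≤ LV := by positivity
  have hgrad : √(wnormSq p (f' (y k) - f' (xhatD y d k))) ≤ LV * ∑ t ∈ range τ, √(W t) :=
    sqrt_wnormSq_grad_sub_delayed_grad_le hpmin_pos hpmin hpmax hLres hf' hy hd
  calc winner p (f' (y k) - f' (xhatD y d k)) (z - y k)
      ≤ √(wnormSq p (f' (y k) - f' (xhatD y d k))) * √S := winner_le_sqrt_mul_sqrt hp _ _
    _ ≤ (LV * ∑ t ∈ range τ, √(W t)) * √S := by gcongr
    _ = ∑ t ∈ range τ, LV * √(W t) * √S := by rw [mul_sum, sum_mul]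
    _ ≤ ∑ t ∈ range τ, (LV / (2 * √pmax) * W t + LV * √pmax / 2 * S) := by
        gcongr with t
        have h := mul_mul_le_young hLV hpmax_pos (√(W t)) (√S)
        rwa [Real.sq_sqrt (wnormSq_nonneg hp _), Real.sq_sqrt (wnormSq_nonneg hp _)] at h
    _ = τ * LV * √pmax / 2 * S + alphaConst Lres pmax pmin * ∑ t ∈ range τ, W t := by
        rw [sum_add_distrib, ← mul_sum, sum_const, card_range, nsmul_eq_mul, alphaConst]
        ring

section Past

variable {Ω : Type*} (idx : ℕ → Ω → Fin m)

def history (k : ℕ) (ω : Ω) : Fin k → Fin m := fun j => idx j ω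

lemma history_eq_of_history_succ_eq {k : ℕ} {ω ω' : Ω}
    (h : history idx (k + 1) ω = history idx (k + 1) ω') :
    history idx k ω = history idx k ω' ∧ idx k ω = idx k ω' :=
  ⟨funext fun j => congrFun h j.castSucc, congrFun h (Fin.last k)⟩

variable [MeasurableSpace Ω]

lemma measurable_history (k : ℕ) : Measurable[pastFiltration idx k] (history idx k) :=
  @measurable_pi_lambda Ω (Fin k) (fun _ => Fin m) (pastFiltration idx k) _ _ fun j =>
    Measurable.of_comap_le (le_iSup₂_of_le (j : ℕ) (mem_range.2 j.2) le_rfl)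

variable {idx}

lemma pastFiltration_le (hidx : ∀ j, Measurable (idx j)) (k : ℕ) :
    pastFiltration idx k ≤ ‹MeasurableSpace Ω› :=
  iSup₂_le fun j _ => (hidx j).comap_le

lemma eq_comp_history_of_factorsThrough {k : ℕ} {F : Ω → ℝ}
    (hF : Function.FactorsThrough F (history idx k)) :
    F = Function.extend (history idx k) F 0 ∘ history idx k :=
  funext fun ω => (hF.extend_apply 0 ω).symm

lemma stronglyMeasurable_pastFiltration_of_factorsThrough {k : ℕ} {F : Ω → ℝ}
    (hF : Function.FactorsThrough F (history idx k)) :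
    StronglyMeasurable[pastFiltration idx k] F := by
  have hcomp := ((measurable_of_countable (Function.extend (history idx k) F 0)).comp
    (measurable_history idx k)).stronglyMeasurable
  exact (eq_comp_history_of_factorsThrough hF).symm ▸ hcomp

lemma integrable_of_factorsThrough_history (hidx : ∀ j, Measurable (idx j))
    (P : Measure Ω) [IsFiniteMeasure P] {k : ℕ} {F : Ω → ℝ}
    (hF : Function.FactorsThrough F (history idx k)) : Integrable F P := by
  rw [eq_comp_history_of_factorsThrough hF]
  exact Integrable.of_finite.comp_measurable
    ((measurable_history idx k).mono (pastFiltration_le hidx k) le_rfl)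

variable {P : Measure Ω} [IsProbabilityMeasure P]

lemma indep_comap_pastFiltration (hidx : ∀ j, Measurable (idx j)) (hiid : iIndepFun idx P)
    (k : ℕ) : Indep (MeasurableSpace.comap (idx k) ⊤) (pastFiltration idx k) P := by
  have h := indep_iSup_of_disjoint (m := fun j => MeasurableSpace.comap (idx j) ⊤)
    (fun j => (hidx j).comap_le) hiid.iIndep (S := {k}) (T := ↑(range k))
    (by simp [Set.disjoint_singleton_left])
  simpa [pastFiltration, _root_.iSup_singleton] using h

lemma condExp_indicator_idx_eq (hidx : ∀ j, Measurable (idx j)) (hiid : iIndepFun idx P)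
    {k : ℕ} {i : Fin m} {q : ℝ} (hq : 0 ≤ q) (hlaw : P {ω | idx k ω = i} = ENNReal.ofReal q) :
    P[(idx k ⁻¹' {i}).indicator (1 : Ω → ℝ) | pastFiltration idx k] =ᵐ[P] fun _ => q := by
  have hsm : StronglyMeasurable[MeasurableSpace.comap (idx k) ⊤]
      ((idx k ⁻¹' {i}).indicator (1 : Ω → ℝ)) :=
    stronglyMeasurable_one.indicator
      ((measurableSet_singleton i).preimage (comap_measurable _))
  refine (condExp_indep_eq (hidx k).comap_le (pastFiltration_le hidx k) hsm
    (indep_comap_pastFiltration hidx hiid k)).trans (Eventually.of_forall fun _ => ?_)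
  rw [integral_indicator_one (hidx k (measurableSet_singleton i)), measureReal_def]
  exact (congrArg ENNReal.toReal hlaw).trans (ENNReal.toReal_ofReal hq)

lemma condExp_comp_idx_eq_sum (hidx : ∀ j, Measurable (idx j)) (hiid : iIndepFun idx P)
    {p : Fin m → ℝ} (hp : ∀ i, 0 ≤ p i) {k : ℕ}
    (hlaw : ∀ i, P {ω | idx k ω = i} = ENNReal.ofReal (p i)) {Y : Fin m → Ω → ℝ}
    (hY : ∀ i, Function.FactorsThrough (Y i) (history idx k)) :
    P[fun ω => Y (idx k ω) ω | pastFiltration idx k] =ᵐ[P] fun ω => ∑ i, p i * Y i ω := by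
  classical
  set ind : Fin m → Ω → ℝ := fun i => (idx k ⁻¹' {i}).indicator 1
  have hdecomp : (fun ω => Y (idx k ω) ω) = ∑ i, Y i * ind i := by
    ext ω
    simp [ind, Set.indicator_apply, eq_comm]
  have hint : ∀ i, Integrable (Y i * ind i) P := fun i =>
    (integrable_of_factorsThrough_history hidx P (hY i)).mul_bdd
      ((stronglyMeasurable_const.indicator (hidx k (measurableSet_singleton i))).aestronglyMeasurable)
      (c := 1) (Eventually.of_forall fun ω => by
        simp only [ind, Set.indicator_apply]; split_ifs <;> simp)
  have hterm : ∀ i, P[Y i * ind i | pastFiltration idx k] =ᵐ[P] fun ω => p i * Y i ω := by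
    intro i
    have hind_int : Integrable (ind i) P :=
      (integrable_const 1).indicator (hidx k (measurableSet_singleton i))
    filter_upwards [condExp_mul_of_stronglyMeasurable_left
      (stronglyMeasurable_pastFiltration_of_factorsThrough (hY i)) (hint i) hind_int,
      condExp_indicator_idx_eq hidx hiid (hp i) (hlaw i)] with ω hmul hind
    rw [hmul, Pi.mul_apply, hind, mul_comm]
  rw [hdecomp]
  filter_upwards [condExp_finsetSum (fun i _ => hint i) (pastFiltration idx k),
    ae_all_iff.2 hterm] with ω hsum hterms
  rw [hsum, Finset.sum_apply]
  exact sum_congr rfl fun i _ => hterms i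

end Past

lemma IsProx.unique {E : Type*} [NormedAddCommGroup E] {c : ℝ} {gi : E → ℝ} {v pt pt' : E}
    (h : IsProx c gi v pt) (h' : IsProx c gi v pt') : pt' = pt :=
  h.2 pt' (h'.1 pt)

def wnormSqIncr {Ω : Type*} (p : Fin m → ℝ) (x : ℤ → Ω → PiLp 2 H) (n : ℤ) (ω : Ω) : ℝ :=
  wnormSq p (x (n + 1) ω - x n ω)

section Alpha

variable {Ω : Type*} (p : Fin m → ℝ) (c : ℝ) (τ : ℕ) (x : ℤ → Ω → PiLp 2 H) (k : ℕ) (ω : Ω)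

lemma alphaV_eq_add :
    alphaV p c τ x k ω = c * ∑ t ∈ range τ, (t : ℝ) * wnormSqIncr p x (k - τ + t) ω +
      c * ∑ t ∈ range τ, wnormSqIncr p x (k - τ + t) ω := by
  simp only [alphaV, wnormSqIncr, add_mul, one_mul, sum_add_distrib, mul_add]

lemma alphaV_succ_eq_add :
    alphaV p c τ x (k + 1) ω = c * ∑ t ∈ range τ, (t : ℝ) * wnormSqIncr p x (k - τ + t) ω +
      c * τ * wnormSqIncr p x k ω := by
  set V : ℕ → ℝ := fun t => wnormSqIncr p x (k - τ + t) ω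
  have hshift : ∀ j : ℕ, wnormSqIncr p x (((k + 1 : ℕ) : ℤ) - τ + j) ω = V (j + 1) := fun j => by
    simp only [V]; congr 1; push_cast; ring
  calc alphaV p c τ x (k + 1) ω = c * ∑ j ∈ range τ, ((j + 1 : ℕ) : ℝ) * V (j + 1) := by
        simp only [← hshift]; push_cast; rfl
    _ = c * ∑ t ∈ range (τ + 1), (t : ℝ) * V t := by
        rw [sum_range_succ' (fun t => (t : ℝ) * V t)]; simp
    _ = _ := by rw [sum_range_succ, mul_add, mul_assoc]; simp [V]

end Alpha

section Trajectory

variable {Ω : Type*} {idx : ℕ → Ω → Fin m} {γ : Fin m → ℝ} {g : ∀ i, H i → ℝ}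
  {f' : PiLp 2 H → PiLp 2 H} {d : ℕ → Fin m → ℕ} {x : ℤ → Ω → PiLp 2 H}
  {xbar : ℕ → Ω → PiLp 2 H} {x0 : PiLp 2 H}

lemma xbar_eq_of_traj_eq
    (hxbar_prox : ∀ (k : ℕ) (ω : Ω) (i : Fin m),
      IsProx (γ i) (g i) (x (k : ℤ) ω i - γ i • f' (xhatP x d k ω) i) (xbar k ω i))
    {k : ℕ} {ω ω' : Ω} (hx : ∀ n : ℤ, n ≤ k → x n ω = x n ω') : xbar k ω = xbar k ω' := by
  have hxhat : xhatP x d k ω = xhatP x d k ω' := by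
    ext j
    simp only [xhatP, hx _ (by omega : (k : ℤ) - d k j ≤ k)]
  ext i
  have h := hxbar_prox k ω i
  rw [hx k le_rfl, hxhat] at h
  exact (hxbar_prox k ω' i).unique h

lemma traj_factorsThrough_history (hx_init : ∀ n : ℤ, n ≤ 0 → ∀ ω : Ω, x n ω = x0)
    (hxbar_prox : ∀ (k : ℕ) (ω : Ω) (i : Fin m),
      IsProx (γ i) (g i) (x (k : ℤ) ω i - γ i • f' (xhatP x d k ω) i) (xbar k ω i))
    (hx_update : ∀ (k : ℕ) (ω : Ω),
      x ((k : ℤ) + 1) ω = upd (x (k : ℤ) ω) (idx k ω) (xbar k ω (idx k ω))) (k : ℕ) :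
    ∀ n : ℤ, n ≤ k → Function.FactorsThrough (x n) (history idx k) := by
  induction k with
  | zero =>
    intro n hn ω ω' _
    rw [hx_init n (by exact_mod_cast hn), hx_init n (by exact_mod_cast hn)]
  | succ k ih =>
    intro n hn ω ω' h
    obtain ⟨hk, hidx⟩ := history_eq_of_history_succ_eq idx h
    have hpast : ∀ n : ℤ, n ≤ k → x n ω = x n ω' := fun n hn => ih n hn hk
    rcases le_or_gt n k with hle | hgt
    · exact hpast n hle
    · obtain rfl : n = k + 1 := by push_cast at hn; omega
      rw [hx_update, hx_update, xbar_eq_of_traj_eq hxbar_prox hpast, hpast k le_rfl, hidx]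

lemma traj_step_subsingleton (hx_init : ∀ n : ℤ, n ≤ 0 → ∀ ω : Ω, x n ω = x0)
    (hx_update : ∀ (k : ℕ) (ω : Ω),
      x ((k : ℤ) + 1) ω = upd (x (k : ℤ) ω) (idx k ω) (xbar k ω (idx k ω)))
    (n : ℤ) (ω : Ω) : {j | x (n + 1) ω j ≠ x n ω j}.Subsingleton := by
  rcases lt_or_ge n 0 with hn | hn
  · simp [hx_init (n + 1) (by omega), hx_init n (by omega)]
  · lift n to ℕ using hn
    refine (Set.subsingleton_singleton (a := idx n ω)).anti fun j hj => ?_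
    by_contra hne
    exact hj (by simp [hx_update, upd, Function.update_of_ne hne])

end Trajectory

lemma condExp_alphaV_succ_le {Ω : Type*} [MeasurableSpace Ω] {P : Measure Ω}
    [IsProbabilityMeasure P] {idx : ℕ → Ω → Fin m} (hidx : ∀ j, Measurable (idx j))
    (hiid : iIndepFun idx P) {p : Fin m → ℝ} (hp : ∀ i, 0 ≤ p i) {pmax : ℝ}
    (hpmax : ∀ i, p i ≤ pmax) {c : ℝ} (hc : 0 ≤ c) {τ k : ℕ}
    (hlaw : ∀ i, P {ω | idx k ω = i} = ENNReal.ofReal (p i))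
    {x : ℤ → Ω → PiLp 2 H} {xbar : ℕ → Ω → PiLp 2 H}
    (hx_update : ∀ ω, x ((k : ℤ) + 1) ω = upd (x (k : ℤ) ω) (idx k ω) (xbar k ω (idx k ω)))
    (hx_past : ∀ n : ℤ, n ≤ k → Function.FactorsThrough (x n) (history idx k))
    (hxbar_past : Function.FactorsThrough (xbar k) (history idx k)) :
    ∀ᵐ ω ∂P, P[(fun ω' => alphaV p c τ x (k + 1) ω') | pastFiltration idx k] ω ≤
      c * ∑ t ∈ range τ, (t : ℝ) * wnormSqIncr p x (k - τ + t) ω +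
        c * τ * pmax * wnormSq p (xbar k ω - x k ω) := by
  set β : Ω → ℝ := fun ω => c * ∑ t ∈ range τ, (t : ℝ) * wnormSqIncr p x (k - τ + t) ω
  set Y : Fin m → Ω → ℝ := fun i ω => c * τ * (p i * ‖xbar k ω i - x k ω i‖ ^ 2)
  have hsplit : (fun ω => alphaV p c τ x (k + 1) ω) = β + fun ω => Y (idx k ω) ω := by
    funext ω
    rw [alphaV_succ_eq_add, wnormSqIncr, hx_update, wnormSq_upd_sub]
    simp only [β, Y, Pi.add_apply, mul_assoc]
  have hβ : Function.FactorsThrough β (history idx k) := fun ω ω' h => by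
    simp only [β, wnormSqIncr]
    congr 1
    refine sum_congr rfl fun t ht => ?_
    have ht' := mem_range.1 ht
    rw [hx_past (k - τ + t + 1) (by omega) h, hx_past (k - τ + t) (by omega) h]
  have hY : ∀ i, Function.FactorsThrough (Y i) (history idx k) := fun i ω ω' h => by
    simp only [Y, hxbar_past h, hx_past k le_rfl h]
  have hYidx : Function.FactorsThrough (fun ω => Y (idx k ω) ω) (history idx (k + 1)) :=
    fun ω ω' h => by
      obtain ⟨hk, hidx_eq⟩ := history_eq_of_history_succ_eq idx h
      simp only [hidx_eq, hY _ hk]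
  have hβ_int := integrable_of_factorsThrough_history hidx P hβ
  filter_upwards [condExp_add hβ_int (integrable_of_factorsThrough_history hidx P hYidx) _,
    condExp_comp_idx_eq_sum hidx hiid hp hlaw hY] with ω hadd hsum
  rw [hsplit, hadd, Pi.add_apply, hsum, condExp_of_stronglyMeasurable (pastFiltration_le hidx k)
    (stronglyMeasurable_pastFiltration_of_factorsThrough hβ) hβ_int]
  gcongr
  rw [wnormSq, mul_sum]
  refine sum_le_sum fun i _ => ?_
  have hYi : 0 ≤ Y i ω :=
    mul_nonneg (mul_nonneg hc τ.cast_nonneg) (mul_nonneg (hp i) (sq_nonneg _))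
  calc p i * Y i ω ≤ pmax * Y i ω := mul_le_mul_of_nonneg_right (hpmax i) hYi
    _ = c * τ * pmax * (p i * ‖(xbar k ω - x k ω) i‖ ^ 2) := by simp only [Y, PiLp.sub_apply]; ring

theorem stmt5_general
    {Ω : Type*} [MeasurableSpace Ω] (P : Measure Ω) [IsProbabilityMeasure P]
    (idx : ℕ → Ω → Fin m) (hidx_meas : ∀ k : ℕ, Measurable (idx k))
    (hidx_iid : iIndepFun idx P)
    (p : Fin m → ℝ) (hp_pos : ∀ i, 0 < p i)
    (hp_law : ∀ (k : ℕ) (i : Fin m), P {ω | idx k ω = i} = ENNReal.ofReal (p i))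
    (τ : ℕ) (d : ℕ → Fin m → ℕ) (hd : ∀ (k : ℕ) (j : Fin m), d k j ≤ min k τ)
    (γ : Fin m → ℝ)
    (f' : PiLp 2 H → PiLp 2 H)
    (Lres : ℝ) (hLres_pos : 0 < Lres)
    (hf_lip_res : ∀ (z : PiLp 2 H) (i : Fin m) (u u' : H i),
      ‖f' (upd z i u) - f' (upd z i u')‖ ≤ Lres * ‖u - u'‖)
    (g : ∀ i, H i → ℝ)
    (x : ℤ → Ω → PiLp 2 H) (x0 : PiLp 2 H)
    (hx_init : ∀ n : ℤ, n ≤ 0 → ∀ ω : Ω, x n ω = x0)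
    (xbar : ℕ → Ω → PiLp 2 H)
    (hxbar_prox : ∀ (k : ℕ) (ω : Ω) (i : Fin m),
      IsProx (γ i) (g i) (x (k : ℤ) ω i - γ i • f' (xhatP x d k ω) i) (xbar k ω i))
    (hx_update : ∀ (k : ℕ) (ω : Ω),
      x ((k : ℤ) + 1) ω = upd (x (k : ℤ) ω) (idx k ω) (xbar k ω (idx k ω)))
    (pmax pmin : ℝ)
    (hpmax : IsGreatest (Set.range p) pmax) (hpmin : IsLeast (Set.range p) pmin)
 :
    ∀ᵐ ω ∂P, ∀ k : ℕ,
      winner p (f' (x (k : ℤ) ω) - f' (xhatP x d k ω)) (xbar k ω - x (k : ℤ) ω) ≤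
        τ * (Lres * Real.sqrt (pmax / pmin)) * Real.sqrt pmax *
            ∑ i, p i * ‖xbar k ω i - x (k : ℤ) ω i‖ ^ 2
          + alphaV p (alphaConst Lres pmax pmin) τ x k ω
          - (P[(fun ω' => alphaV p (alphaConst Lres pmax pmin) τ x (k + 1) ω')|pastFiltration idx k]) ω := by
  obtain ⟨i₀, hi₀⟩ := hpmin.1
  have hpmin_pos : 0 < pmin := hi₀ ▸ hp_pos i₀
  have hpmax_ge : ∀ i, p i ≤ pmax := fun i => hpmax.2 ⟨i, rfl⟩
  have hpmin_le : ∀ i, pmin ≤ p i := fun i => hpmin.2 ⟨i, rfl⟩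
  have hpmin_le_pmax : pmin ≤ pmax := (hpmin_le i₀).trans (hpmax_ge i₀)
  have hx_past := traj_factorsThrough_history hx_init hxbar_prox hx_update
  rw [ae_all_iff]
  intro k
  filter_upwards [condExp_alphaV_succ_le hidx_meas hidx_iid (fun i => (hp_pos i).le) hpmax_ge
    (alphaConst_nonneg hLres_pos.le pmax pmin) (hp_law k) (hx_update k) (hx_past k)
    (fun ω ω' h => xbar_eq_of_traj_eq hxbar_prox fun n hn => hx_past k n hn h)] with ω hcond
  have hdet : winner p (f' (x k ω) - f' (xhatP x d k ω)) (xbar k ω - x k ω) ≤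
      τ * (Lres * √(pmax / pmin)) * √pmax / 2 * wnormSq p (xbar k ω - x k ω) +
        alphaConst Lres pmax pmin * ∑ t ∈ range τ, wnormSqIncr p x (k - τ + t) ω :=
    winner_grad_sub_delayed_grad_le (y := fun n => x n ω) hpmin_pos hpmin_le hpmax_ge hpmin_le_pmax
      hLres_pos.le hf_lip_res (traj_step_subsingleton hx_init hx_update · ω)
      (fun j => (hd k j).trans (min_le_right _ _)) (xbar k ω)
  have hconst := alphaConst_mul (hpmin_pos.trans_le hpmin_le_pmax) pmin (Lres := Lres)
  have hS : ∑ i, p i * ‖xbar k ω i - x k ω i‖ ^ 2 = wnormSq p (xbar k ω - x k ω) := rfl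
  rw [hS, alphaV_eq_add]
  linear_combination hdet + hcond + (τ * wnormSq p (xbar k ω - x k ω)) * hconst

/-- Lemma: delayed-gradient inner product bound. `P`-a.s., for all `k`,
`⟪∇f(x^k) - ∇f(x̂^k), x̄^{k+1} - x^k⟫_V ≤ τ L_res^V √p_max ∑_i p_i‖x̄^{k+1}_i - x^k_i‖²
  + α_k - E[α_{k+1} | i_0,…,i_{k-1}]`. -/
theorem stmt5
    [∀ i, CompleteSpace (H i)] [∀ i, TopologicalSpace.SeparableSpace (H i)]
    (hm : 0 < m)
    {Ω : Type*} [MeasurableSpace Ω] (P : Measure Ω) [IsProbabilityMeasure P]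
    (idx : ℕ → Ω → Fin m) (hidx_meas : ∀ k : ℕ, Measurable (idx k))
    (hidx_iid : iIndepFun idx P)
    (p : Fin m → ℝ) (hp_pos : ∀ i, 0 < p i)
    (hp_law : ∀ (k : ℕ) (i : Fin m), P {ω | idx k ω = i} = ENNReal.ofReal (p i))
    (τ : ℕ) (d : ℕ → Fin m → ℕ) (hd : ∀ (k : ℕ) (j : Fin m), d k j ≤ min k τ)
    (γ : Fin m → ℝ) (hγ_pos : ∀ i, 0 < γ i)
    (f : PiLp 2 H → ℝ) (f' : PiLp 2 H → PiLp 2 H)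
    (hf_grad : ∀ z : PiLp 2 H, HasGradientAt f (f' z) z)
    (hf_convex : ConvexOn ℝ Set.univ f)
    (Lres : ℝ) (hLres_pos : 0 < Lres) (L : Fin m → ℝ)
    (hf_lip_res : ∀ (z : PiLp 2 H) (i : Fin m) (u u' : H i),
      ‖f' (upd z i u) - f' (upd z i u')‖ ≤ Lres * ‖u - u'‖)
    (hf_lip_blk : ∀ (z : PiLp 2 H) (i : Fin m) (u u' : H i),
      ‖f' (upd z i u) i - f' (upd z i u') i‖ ≤ L i * ‖u - u'‖)
    (g : ∀ i, H i → ℝ) (hg_convex : ∀ i, ConvexOn ℝ Set.univ (g i))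
    (hg_lsc : ∀ i, LowerSemicontinuous (g i))
    (Fstar : ℝ) (hFstar : IsLeast (Set.range (Fobj f g)) Fstar)
    (x : ℤ → Ω → PiLp 2 H) (x0 : PiLp 2 H)
    (hx_init : ∀ n : ℤ, n ≤ 0 → ∀ ω : Ω, x n ω = x0)
    (xbar : ℕ → Ω → PiLp 2 H)
    (hxbar_prox : ∀ (k : ℕ) (ω : Ω) (i : Fin m),
      IsProx (γ i) (g i) (x (k : ℤ) ω i - γ i • f' (xhatP x d k ω) i) (xbar k ω i))
    (hx_update : ∀ (k : ℕ) (ω : Ω),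
      x ((k : ℤ) + 1) ω = upd (x (k : ℤ) ω) (idx k ω) (xbar k ω (idx k ω)))
    (pmax pmin : ℝ)
    (hpmax : IsGreatest (Set.range p) pmax) (hpmin : IsLeast (Set.range p) pmin)
 :
    ∀ᵐ ω ∂P, ∀ k : ℕ,
      winner p (f' (x (k : ℤ) ω) - f' (xhatP x d k ω)) (xbar k ω - x (k : ℤ) ω) ≤
        τ * (Lres * Real.sqrt (pmax / pmin)) * Real.sqrt pmax *
            ∑ i, p i * ‖xbar k ω i - x (k : ℤ) ω i‖ ^ 2
          + alphaV p (alphaConst Lres pmax pmin) τ x k ω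
          - (P[(fun ω' => alphaV p (alphaConst Lres pmax pmin) τ x (k + 1) ω')|pastFiltration idx k]) ω :=
  stmt5_general P idx hidx_meas hidx_iid p hp_pos hp_law τ d hd γ f' Lres hLres_pos hf_lip_res g x
    x0 hx_init xbar hxbar_prox hx_update pmax pmin hpmax hpmin
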